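/- For all integers m ≥ 2 and n = 0, with u(m,0) := Σ_{y=0}^{⌊m/2⌋} 2^{2y−m}·C(m−2y, y) for m ≥ 0, one has 2·u(m,0) + u(m−1,0) + u(m−2,0) = 2. -/

import Mathlib

open Finset

/-- Binomial coefficient on the integers, with `C a b = 0` unless `0 ≤ b ≤ a`. -/
def C (a b : ℤ) : ℚ := if 0 ≤ b ∧ b ≤ a then (Nat.choose a.toNat b.toNat : ℚ) else 0

/-- `u(m,0) = Σ_{y=0}^{⌊m/2⌋} 2^{2y−m} · C(m−2y, y)`, with `u = 0` for negative `m`. -/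
noncomputable def U (m : ℤ) : ℚ :=
  if 0 ≤ m then ∑ y ∈ Finset.Icc 0 (m / 2), (2 : ℚ) ^ (2 * y - m) * C (m - 2 * y) y else 0

lemma C_of_neg (a b : ℤ) (h : a < b) : C a b = 0 := by
  unfold C; rw [if_neg (by omega)]

lemma C_of_bneg (a b : ℤ) (h : b < 0) : C a b = 0 := by
  unfold C; rw [if_neg (by omega)]

lemma pascal (a b : ℤ) (ha : 0 ≤ a) (h : ¬(a = 0 ∧ b = 0)) :
    C a b = C (a - 1) b + C (a - 1) (b - 1) := by
  rcases lt_or_ge b 0 with hb | hb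
  · rw [C_of_bneg _ _ hb, C_of_bneg _ _ (by omega), C_of_bneg _ _ (by omega)]; ring
  rcases eq_or_lt_of_le hb with hb0 | hb1
  · -- b = 0, a ≥ 1
    have ha1 : 1 ≤ a := by omega
    unfold C
    rw [if_pos (by omega), if_pos (by omega), if_neg (by omega), ← hb0]
    simp
  rcases lt_or_ge a b with hab | hab
  · rw [C_of_neg _ _ hab, C_of_neg _ _ (by omega), C_of_neg _ _ (by omega)]; ring
  · -- 1 ≤ b ≤ a
    rcases eq_or_lt_of_le hab with hba | hba
    · rw [hba]
      unfold C
      rw [if_pos (by omega), if_neg (by omega), if_pos (by omega)]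
      simp [Nat.choose_self]
    · -- b < a
      unfold C
      rw [if_pos (by omega), if_pos (by omega), if_pos (by omega)]
      have h1 : a.toNat = (a - 1).toNat + 1 := by omega
      have h2 : b.toNat = (b - 1).toNat + 1 := by omega
      rw [h1, h2, Nat.choose_succ_succ]
      push_cast
      ring

lemma U_of_nonneg (m : ℤ) (h : 0 ≤ m) :
    U m = ∑ y ∈ Finset.Icc 0 (m / 2), (2 : ℚ) ^ (2 * y - m) * C (m - 2 * y) y := by
  rw [U, if_pos h]

lemma Urec (m : ℤ) (hm : 3 ≤ m) : 2 * U m = U (m - 1) + U (m - 3) := by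
  have h2 : (2:ℚ) ≠ 0 := two_ne_zero
  rw [U_of_nonneg m (by omega), Finset.mul_sum]
  have step : ∀ y ∈ Finset.Icc 0 (m / 2),
      2 * ((2 : ℚ) ^ (2 * y - m) * C (m - 2 * y) y)
        = (2 : ℚ) ^ (2 * y - (m - 1)) * C ((m - 1) - 2 * y) y
          + (2 : ℚ) ^ (2 * y - (m - 1)) * C ((m - 1) - 2 * y) (y - 1) := by
    intro y hy
    simp only [Finset.mem_Icc] at hy
    rw [pascal (m - 2 * y) y (by omega) (by omega)]
    rw [show m - 2 * y - 1 = (m - 1) - 2 * y by ring]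
    rw [show 2 * y - (m - 1) = (2 * y - m) + 1 by ring, zpow_add₀ h2, zpow_one]
    ring
  rw [Finset.sum_congr rfl step, Finset.sum_add_distrib]
  congr 1
  · -- first sum = U (m-1)
    rw [U_of_nonneg (m - 1) (by omega)]
    rw [← Finset.sum_subset (Finset.Icc_subset_Icc_right (by omega : (m-1)/2 ≤ m/2))]
    intro y hy hy'
    simp only [Finset.mem_Icc] at hy hy'
    rw [C_of_neg _ _ (by omega), mul_zero]
  · -- second sum = U (m-3)
    rw [← Finset.sum_subset (Finset.Icc_subset_Icc_left (by omega : (0:ℤ) ≤ 1))]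
    · have hmap : Finset.Icc (1:ℤ) (m / 2)
          = Finset.map (addLeftEmbedding 1) (Finset.Icc 0 (m / 2 - 1)) := by
        rw [Finset.map_add_left_Icc]; congr 1 <;> ring
      rw [hmap, Finset.sum_map]
      simp only [addLeftEmbedding_apply]
      rw [U_of_nonneg (m - 3) (by omega)]
      have step2 : ∀ z ∈ Finset.Icc (0:ℤ) (m / 2 - 1),
          (2 : ℚ) ^ (2 * (1 + z) - (m - 1)) * C ((m - 1) - 2 * (1 + z)) (1 + z - 1)
            = (2 : ℚ) ^ (2 * z - (m - 3)) * C ((m - 3) - 2 * z) z := by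
        intro z hz
        rw [show 2 * (1 + z) - (m - 1) = 2 * z - (m - 3) by ring,
          show (m - 1) - 2 * (1 + z) = (m - 3) - 2 * z by ring,
          show 1 + z - 1 = z by ring]
      rw [Finset.sum_congr rfl step2]
      rw [← Finset.sum_subset (Finset.Icc_subset_Icc_right (by omega : (m-3)/2 ≤ m/2 - 1))]
      intro z hz hz'
      simp only [Finset.mem_Icc] at hz hz'
      rw [C_of_neg _ _ (by omega), mul_zero]
    · intro y hy hy'
      simp only [Finset.mem_Icc] at hy hy'
      rw [C_of_bneg _ _ (by omega), mul_zero]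

lemma U0 : U 0 = 1 := by
  rw [U_of_nonneg 0 le_rfl]
  norm_num [C]

lemma U1 : U 1 = 1/2 := by
  rw [U_of_nonneg 1 (by norm_num)]
  norm_num [C]

lemma U2 : U 2 = 1/4 := by
  rw [U_of_nonneg 2 (by norm_num)]
  have : (2:ℤ)/2 = 1 := by norm_num
  rw [this, show Finset.Icc (0:ℤ) 1 = {0,1} by decide]
  rw [Finset.sum_insert (by decide), Finset.sum_singleton]
  norm_num [C]

theorem two_U_add_eq_two (m : ℤ) (hm : 2 ≤ m) :
    2 * U m + U (m - 1) + U (m - 2) = 2 := by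
  refine Int.le_induction (motive := fun k _ => 2 * U k + U (k - 1) + U (k - 2) = 2) ?_ ?_ m hm
  · norm_num [U2, U1, U0]
  · intro n hn ih
    have hrec := Urec (n + 1) (by omega)
    rw [show n + 1 - 1 = n by ring] at hrec ⊢
    rw [show n + 1 - 3 = n - 2 by ring] at hrec
    rw [show n + 1 - 2 = n - 1 by ring]
    linarith [ih, hrec]
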